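/- Let X ⊆ A^G be a subshift and let U₀(X,A) be the set of uniformly continuous f : X → A such that (f(g⁻¹·x))_{g∈G} ∈ X for all x ∈ X. Then the operation (f₁ ∗ f₂)(x) = f₁((f₂(g⁻¹·x))_{g∈G}) makes U₀(X,A) a monoid, naturally isomorphic to the monoid of cellular automata X → X under composition. -/
import Mathlib

open Filter Set
open scoped Uniformity

/-- The shift action of `G` on `A^G`: `(g · x)(h) = x (g⁻¹ h)`. -/
def shift {G A : Type*} [Group G] (g : G) (x : G → A) : G → A :=
  fun h => x (g⁻¹ * h)

/-- A cellular automaton over `G` with alphabet `A`: there is a finite memory set `S`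
and a local rule `μ : A^S → A` with `T x g = μ ((g⁻¹ · x)|_S)`. -/
def IsCellularAutomaton {G A : Type*} [Group G] (T : (G → A) → (G → A)) : Prop :=
  ∃ S : Finset G, ∃ μ : (S → A) → A,
    ∀ (x : G → A) (g : G), T x g = μ (fun s => shift g⁻¹ x s.1)

/-- A cellular automaton `X → X` on a subshift `X ⊆ A^G`: there is a finite `S ⊆ G`
and `μ : A^S → A` with `(T x) g = μ ((g⁻¹ · x)|_S)` for all `x ∈ X`, `g ∈ G`. -/
def IsCellularAutomatonOn {G A : Type*} [Group G] (X : Set (G → A)) (T : X → X) : Prop :=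
  ∃ S : Finset G, ∃ μ : (S → A) → A,
    ∀ (x : X) (g : G), (T x : G → A) g = μ (fun s => shift g⁻¹ (x : G → A) s.1)

/-- Membership in `U₀(X, A)`: `f : X → A` is uniformly continuous and
`(f (g⁻¹ · x))_{g ∈ G} ∈ X` for every `x ∈ X`. -/
def MemU₀ {G A : Type*} [Group G] [UniformSpace A] (X : Set (G → A))
    (hX : ∀ (g : G), ∀ x ∈ X, shift g x ∈ X) (f : X → A) : Prop :=
  UniformContinuous f ∧ ∀ x : X, (fun g => f ⟨shift g⁻¹ (x : G → A), hX g⁻¹ x x.2⟩) ∈ X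

/-- The operation `(f₁ ∗ f₂)(x) = f₁ ((f₂ (g⁻¹ · x))_{g ∈ G})` on `U₀(X, A)`. -/
def starOpX {G A : Type*} [Group G] (X : Set (G → A))
    (hX : ∀ (g : G), ∀ x ∈ X, shift g x ∈ X) (f₁ f₂ : X → A)
    (h₂ : ∀ x : X, (fun g => f₂ ⟨shift g⁻¹ (x : G → A), hX g⁻¹ x x.2⟩) ∈ X) : X → A :=
  fun x => f₁ ⟨fun g => f₂ ⟨shift g⁻¹ (x : G → A), hX g⁻¹ x x.2⟩, h₂ x⟩

section Aux
variable {G A : Type*} [Group G]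

lemma shift_shift (a b : G) (x : G → A) : shift a (shift b x) = shift (a * b) x := by
  funext h; simp [shift, mul_assoc]

lemma shift_one' (x : G → A) : shift (1 : G) x = x := by
  funext h; simp [shift]

/-- Membership in the uniformity of a subset of `A^G` with `A` discrete. -/
lemma mem_unif_iff (X : Set (G → A)) (s : Set (X × X)) :
    letI : UniformSpace A := ⊥
    (s ∈ 𝓤 X ↔ ∃ S : Finset G, ∀ x y : X,
      (∀ g ∈ S, (x : G → A) g = (y : G → A) g) → (x, y) ∈ s) := by
  letI : UniformSpace A := ⊥
  have hU : 𝓤 X = ⨅ g : G, 𝓟 {p : X × X | (p.1 : G → A) g = (p.2 : G → A) g} := by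
    rw [uniformity_setCoe, Pi.uniformity]
    simp only [bot_uniformity, comap_iInf, comap_comap, comap_principal]
    congr 1
  rw [hU]
  constructor
  · intro hs
    rw [Filter.mem_iInf] at hs
    obtain ⟨I, hIfin, V, hV, rfl⟩ := hs
    refine ⟨hIfin.toFinset, fun x y hxy => ?_⟩
    refine mem_iInter.2 fun i => ?_
    have := hV i
    rw [mem_principal] at this
    exact this (hxy i.1 (hIfin.mem_toFinset.2 i.2))
  · rintro ⟨S, hS⟩
    refine mem_iInf_of_iInter (I := (S : Set G)) S.finite_toSet
      (V := fun i => {p : X × X | (p.1 : G → A) i.1 = (p.2 : G → A) i.1})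
      (fun i => mem_principal_self _) ?_
    intro p hp
    exact hS p.1 p.2 (fun g hg => mem_iInter.1 hp ⟨g, hg⟩)

/-- Curtis–Hedlund style characterization of uniform continuity for discrete `A`. -/
lemma uc_iff (X : Set (G → A)) (f : X → A) :
    letI : UniformSpace A := ⊥
    (UniformContinuous f ↔ ∃ S : Finset G, ∀ x y : X,
      (∀ g ∈ S, (x : G → A) g = (y : G → A) g) → f x = f y) := by
  letI : UniformSpace A := ⊥
  have : UniformContinuous f ↔ {p : X × X | f p.1 = f p.2} ∈ 𝓤 X := by
    unfold UniformContinuous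
    rw [bot_uniformity, tendsto_principal]
    rfl
  rw [this, mem_unif_iff]
  rfl

/-- `Θ f : X → X`, `(Θ f x) g = f (g⁻¹ · x)`. -/
def theta (X : Set (G → A)) (hX : ∀ (g : G), ∀ x ∈ X, shift g x ∈ X) (f : X → A)
    (hf : ∀ x : X, (fun g => f ⟨shift g⁻¹ (x : G → A), hX g⁻¹ x x.2⟩) ∈ X) : X → X :=
  fun x => ⟨fun g => f ⟨shift g⁻¹ (x : G → A), hX g⁻¹ x x.2⟩, hf x⟩

lemma theta_shift (X : Set (G → A)) (hX : ∀ (g : G), ∀ x ∈ X, shift g x ∈ X) (f : X → A)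
    (hf : ∀ x : X, (fun g => f ⟨shift g⁻¹ (x : G → A), hX g⁻¹ x x.2⟩) ∈ X)
    (x : X) (g : G) :
    theta X hX f hf ⟨shift g⁻¹ (x : G → A), hX g⁻¹ x x.2⟩ =
      ⟨shift g⁻¹ (theta X hX f hf x : G → A),
        hX g⁻¹ _ (theta X hX f hf x).2⟩ := by
  apply Subtype.ext; funext k
  show f ⟨shift k⁻¹ (shift g⁻¹ (x : G → A)), _⟩ =
    (theta X hX f hf x : G → A) ((g⁻¹)⁻¹ * k)
  rw [inv_inv]
  show f ⟨shift k⁻¹ (shift g⁻¹ (x : G → A)), _⟩ = f ⟨shift (g * k)⁻¹ (x : G → A), _⟩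
  refine congrArg f (Subtype.ext ?_)
  show shift k⁻¹ (shift g⁻¹ (x : G → A)) = shift (g * k)⁻¹ (x : G → A)
  rw [shift_shift, mul_inv_rev]

lemma ca_point {X : Set (G → A)} (hX : ∀ (g : G), ∀ x ∈ X, shift g x ∈ X)
    {T : X → X} (hT : IsCellularAutomatonOn X T) (x : X) (g : G) :
    (T x : G → A) g = (T ⟨shift g⁻¹ (x : G → A), hX g⁻¹ x x.2⟩ : G → A) 1 := by
  obtain ⟨S, μ, h⟩ := hT
  rw [h, h]
  congr 1
  funext s
  simp [shift]

end Aux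

/-- Theorem B: for a subshift `X ⊆ A^G`, the operation `∗` makes `U₀(X, A)` a monoid,
naturally isomorphic (via `T ↦ f_T`, `f_T x = (T x) 1`) to the monoid of cellular
automata `X → X` under composition. -/
theorem stmt19 {G A : Type*} [Group G] [Nonempty A]
    (X : Set (G → A))
    (hclosed : letI : UniformSpace A := ⊥; IsClosed X)
    (hX : ∀ (g : G), ∀ x ∈ X, shift g x ∈ X) :
    letI : UniformSpace A := ⊥
    -- `∗` is well defined on `U₀(X, A)`
    (∀ f₁ f₂ : X → A, ∀ h₁ : MemU₀ X hX f₁, ∀ h₂ : MemU₀ X hX f₂,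
      MemU₀ X hX (starOpX X hX f₁ f₂ h₂.2)) ∧
    -- `∗` is associative
    (∀ f₁ f₂ f₃ : X → A, MemU₀ X hX f₁ → ∀ h₂ : MemU₀ X hX f₂, ∀ h₃ : MemU₀ X hX f₃,
      ∀ h₂₃ : ∀ x : X,
        (fun g => starOpX X hX f₂ f₃ h₃.2 ⟨shift g⁻¹ (x : G → A), hX g⁻¹ x x.2⟩) ∈ X,
      starOpX X hX (starOpX X hX f₁ f₂ h₂.2) f₃ h₃.2 =
        starOpX X hX f₁ (starOpX X hX f₂ f₃ h₃.2) h₂₃) ∧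
    -- the projection `p₁ : x ↦ x 1` lies in `U₀(X, A)` and is a two-sided identity
    (MemU₀ X hX (fun x : X => (x : G → A) 1)) ∧
    (∀ f : X → A, ∀ hf : MemU₀ X hX f,
      ∀ hp : ∀ x : X,
        (fun g => (fun y : X => (y : G → A) 1) ⟨shift g⁻¹ (x : G → A), hX g⁻¹ x x.2⟩) ∈ X,
      starOpX X hX (fun x : X => (x : G → A) 1) f hf.2 = f ∧
      starOpX X hX f (fun x : X => (x : G → A) 1) hp = f) ∧
    -- `T ↦ f_T` maps cellular automata into `U₀(X, A)` ...
    (∀ T : X → X, IsCellularAutomatonOn X T → MemU₀ X hX (fun x : X => (T x : G → A) 1)) ∧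
    -- ... injectively ...
    (∀ T₁ T₂ : X → X, IsCellularAutomatonOn X T₁ → IsCellularAutomatonOn X T₂ →
      (∀ x : X, (T₁ x : G → A) 1 = (T₂ x : G → A) 1) → T₁ = T₂) ∧
    -- ... surjectively ...
    (∀ f : X → A, MemU₀ X hX f →
      ∃ T : X → X, IsCellularAutomatonOn X T ∧ (fun x : X => (T x : G → A) 1) = f) ∧
    -- ... and multiplicatively: `f_{T₁ ∘ T₂} = f_{T₁} ∗ f_{T₂}`
    (∀ T₁ T₂ : X → X, IsCellularAutomatonOn X T₁ →
      ∀ h₂ : IsCellularAutomatonOn X T₂,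
      ∀ hm : ∀ x : X,
        (fun g => (T₂ ⟨shift g⁻¹ (x : G → A), hX g⁻¹ x x.2⟩ : G → A) 1) ∈ X,
      (fun x : X => ((T₁ ∘ T₂) x : G → A) 1) =
        starOpX X hX (fun x : X => (T₁ x : G → A) 1) (fun x : X => (T₂ x : G → A) 1) hm) := by
  classical
  letI : UniformSpace A := ⊥
  -- part 1
  have part1 : ∀ f₁ f₂ : X → A, ∀ h₁ : MemU₀ X hX f₁, ∀ h₂ : MemU₀ X hX f₂,
      MemU₀ X hX (starOpX X hX f₁ f₂ h₂.2) := by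
    intro f₁ f₂ h₁ h₂
    obtain ⟨S₁, hS₁⟩ := (uc_iff X f₁).1 h₁.1
    obtain ⟨S₂, hS₂⟩ := (uc_iff X f₂).1 h₂.1
    constructor
    · rw [uc_iff]
      refine ⟨(S₁ ×ˢ S₂).image (fun p => p.1 * p.2), fun x y hxy => ?_⟩
      show f₁ (theta X hX f₂ h₂.2 x) = f₁ (theta X hX f₂ h₂.2 y)
      apply hS₁
      intro s hs
      show f₂ ⟨shift s⁻¹ (x : G → A), _⟩ = f₂ ⟨shift s⁻¹ (y : G → A), _⟩
      apply hS₂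
      intro t ht
      show shift s⁻¹ (x : G → A) t = shift s⁻¹ (y : G → A) t
      simp only [shift, inv_inv]
      exact hxy (s * t) (Finset.mem_image.2 ⟨(s, t), Finset.mem_product.2 ⟨hs, ht⟩, rfl⟩)
    · intro x
      show (fun g => f₁ (theta X hX f₂ h₂.2 ⟨shift g⁻¹ (x : G → A), hX g⁻¹ x x.2⟩)) ∈ X
      have key : ∀ g : G, theta X hX f₂ h₂.2 ⟨shift g⁻¹ (x : G → A), hX g⁻¹ x x.2⟩ =
          ⟨shift g⁻¹ (theta X hX f₂ h₂.2 x : G → A),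
            hX g⁻¹ _ (theta X hX f₂ h₂.2 x).2⟩ := fun g => theta_shift X hX f₂ h₂.2 x g
      simp only [key]
      exact h₁.2 (theta X hX f₂ h₂.2 x)
  -- part 2
  have part2 : ∀ f₁ f₂ f₃ : X → A, MemU₀ X hX f₁ → ∀ h₂ : MemU₀ X hX f₂,
      ∀ h₃ : MemU₀ X hX f₃,
      ∀ h₂₃ : ∀ x : X,
        (fun g => starOpX X hX f₂ f₃ h₃.2 ⟨shift g⁻¹ (x : G → A), hX g⁻¹ x x.2⟩) ∈ X,
      starOpX X hX (starOpX X hX f₁ f₂ h₂.2) f₃ h₃.2 =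
        starOpX X hX f₁ (starOpX X hX f₂ f₃ h₃.2) h₂₃ := by
    intro f₁ f₂ f₃ h₁ h₂ h₃ h₂₃
    funext x
    show f₁ (theta X hX f₂ h₂.2 (theta X hX f₃ h₃.2 x)) =
      f₁ (theta X hX (starOpX X hX f₂ f₃ h₃.2) h₂₃ x)
    refine congrArg f₁ (Subtype.ext (funext fun g => ?_))
    show f₂ ⟨shift g⁻¹ (theta X hX f₃ h₃.2 x : G → A), _⟩ =
      f₂ (theta X hX f₃ h₃.2 ⟨shift g⁻¹ (x : G → A), hX g⁻¹ x x.2⟩)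
    rw [theta_shift]
  -- part 3
  have part3 : MemU₀ X hX (fun x : X => (x : G → A) 1) := by
    constructor
    · rw [uc_iff]
      exact ⟨{1}, fun x y h => h 1 (Finset.mem_singleton_self 1)⟩
    · intro x
      show (fun g => shift g⁻¹ (x : G → A) 1) ∈ X
      have : (fun g => shift g⁻¹ (x : G → A) 1) = (x : G → A) := by
        funext g; simp [shift]
      rw [this]; exact x.2
  -- part 4
  have part4 : ∀ f : X → A, ∀ hf : MemU₀ X hX f,
      ∀ hp : ∀ x : X,
        (fun g => (fun y : X => (y : G → A) 1) ⟨shift g⁻¹ (x : G → A), hX g⁻¹ x x.2⟩) ∈ X,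
      starOpX X hX (fun x : X => (x : G → A) 1) f hf.2 = f ∧
      starOpX X hX f (fun x : X => (x : G → A) 1) hp = f := by
    intro f hf hp
    constructor
    · funext x
      show f ⟨shift (1 : G)⁻¹ (x : G → A), _⟩ = f x
      refine congrArg f (Subtype.ext ?_)
      show shift (1 : G)⁻¹ (x : G → A) = (x : G → A)
      rw [inv_one]; exact shift_one' _
    · funext x
      show f ⟨fun g => shift g⁻¹ (x : G → A) 1, _⟩ = f x
      exact congrArg f (Subtype.ext (funext fun g => by simp [shift]))
  -- part 5
  have part5 : ∀ T : X → X, IsCellularAutomatonOn X T →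
      MemU₀ X hX (fun x : X => (T x : G → A) 1) := by
    intro T hT
    obtain ⟨S, μ, h⟩ := hT
    constructor
    · rw [uc_iff]
      refine ⟨S, fun x y hxy => ?_⟩
      show (T x : G → A) 1 = (T y : G → A) 1
      rw [h, h]
      congr 1
      funext s
      show shift (1 : G)⁻¹ (x : G → A) s.1 = shift (1 : G)⁻¹ (y : G → A) s.1
      simp only [shift, inv_one, one_mul, inv_inv]
      exact hxy s.1 s.2
    · intro x
      show (fun g => (T ⟨shift g⁻¹ (x : G → A), hX g⁻¹ x x.2⟩ : G → A) 1) ∈ X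
      have : (fun g => (T ⟨shift g⁻¹ (x : G → A), hX g⁻¹ x x.2⟩ : G → A) 1)
          = (T x : G → A) := by
        funext g
        exact (ca_point hX ⟨S, μ, h⟩ x g).symm
      rw [this]; exact (T x).2
  -- part 6
  have part6 : ∀ T₁ T₂ : X → X, IsCellularAutomatonOn X T₁ → IsCellularAutomatonOn X T₂ →
      (∀ x : X, (T₁ x : G → A) 1 = (T₂ x : G → A) 1) → T₁ = T₂ := by
    intro T₁ T₂ h₁ h₂ heq
    funext x
    apply Subtype.ext
    funext g
    rw [ca_point hX h₁ x g, ca_point hX h₂ x g]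
    exact heq _
  -- part 7
  have part7 : ∀ f : X → A, MemU₀ X hX f →
      ∃ T : X → X, IsCellularAutomatonOn X T ∧ (fun x : X => (T x : G → A) 1) = f := by
    intro f hf
    obtain ⟨S, hS⟩ := (uc_iff X f).1 hf.1
    refine ⟨theta X hX f hf.2, ⟨S,
      fun p => if h : ∃ x : X, ∀ s : S, (x : G → A) s.1 = p s then f h.choose
        else Classical.arbitrary A, ?_⟩, ?_⟩
    · intro x g
      show f ⟨shift g⁻¹ (x : G → A), _⟩ = _
      have hex : ∃ y : X, ∀ s : S, (y : G → A) s.1 = shift g⁻¹ (x : G → A) s.1 :=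
        ⟨⟨shift g⁻¹ (x : G → A), hX g⁻¹ x x.2⟩, fun s => rfl⟩
      show f ⟨shift g⁻¹ (x : G → A), hX g⁻¹ x x.2⟩ =
        if h : ∃ y : X, ∀ s : S, (y : G → A) s.1 = shift g⁻¹ (x : G → A) s.1 then f h.choose
        else Classical.arbitrary A
      rw [dif_pos hex]
      exact (hS hex.choose ⟨shift g⁻¹ (x : G → A), hX g⁻¹ x x.2⟩
        (fun t ht => hex.choose_spec ⟨t, ht⟩)).symm
    · funext x
      show f ⟨shift (1 : G)⁻¹ (x : G → A), _⟩ = f x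
      refine congrArg f (Subtype.ext ?_)
      show shift (1 : G)⁻¹ (x : G → A) = (x : G → A)
      rw [inv_one]; exact shift_one' _
  -- part 8
  have part8 : ∀ T₁ T₂ : X → X, IsCellularAutomatonOn X T₁ →
      ∀ h₂ : IsCellularAutomatonOn X T₂,
      ∀ hm : ∀ x : X,
        (fun g => (T₂ ⟨shift g⁻¹ (x : G → A), hX g⁻¹ x x.2⟩ : G → A) 1) ∈ X,
      (fun x : X => ((T₁ ∘ T₂) x : G → A) 1) =
        starOpX X hX (fun x : X => (T₁ x : G → A) 1)
          (fun x : X => (T₂ x : G → A) 1) hm := by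
    intro T₁ T₂ h₁ h₂ hm
    funext x
    show (T₁ (T₂ x) : G → A) 1 =
      (T₁ ⟨fun g => (T₂ ⟨shift g⁻¹ (x : G → A), hX g⁻¹ x x.2⟩ : G → A) 1, hm x⟩ : G → A) 1
    have : T₂ x = (⟨fun g => (T₂ ⟨shift g⁻¹ (x : G → A), hX g⁻¹ x x.2⟩ : G → A) 1, hm x⟩ : X) :=
      Subtype.ext (funext fun g => ca_point hX h₂ x g)
    rw [this]
  exact ⟨part1, part2, part3, part4, part5, part6, part7, part8⟩
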